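/- Let Σ be a finite alphabet of size q ≥ 2, n ≥ 1, δ ∈ (0,1), and set t = n(1 − 1/q)(1 − δ). Consider the messageless secret-key code where the key sk is uniform on Σ^n, Enc(sk) = sk, and Dec(sk, γ) outputs valid if γ = sk, tampered if 0 < dist(γ, sk) ≤ t, and invalid if dist(γ, sk) > t. Then: (a) correctness holds, i.e. Dec(sk, Enc(sk)) = valid for every sk; (b) soundness: for every fixed γ̂ ∈ Σ^n, P_sk[Dec(sk, γ̂) ≠ invalid] = P_sk[dist(γ̂, sk) ≤ t] ≤ exp(−δ²(1 − 1/q)n/3); and (c) tamper detection: for every (possibly randomized) tampering function f : Σ^n → Σ^n that always changes at most t coordinates of its input, P[Dec(sk, f(sk)) ≠ tampered ∧ f(sk) ≠ sk] = 0. Hence this code achieves tamper detection at rate α = (1 − 1/q)(1 − δ) with soundness error exponentially small in n(1 − 1/q). -/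

import Mathlib

open Finset Classical

/-- Decoding outcomes of a messageless secret-key code. -/
inductive DecOut where
  | valid
  | invalid
  | tampered
deriving DecidableEq

/-- The decoder of the simple construction with threshold `t`: `valid` if `γ = sk`,
`tampered` if `0 < dist(γ, sk) ≤ t`, and `invalid` if `dist(γ, sk) > t`. -/
noncomputable def simpleDec {S : Type} [Fintype S] [DecidableEq S] {n : ℕ}
    (t : ℝ) (sk γ : Fin n → S) : DecOut :=
  if γ = sk then DecOut.valid
  else if (hammingDist γ sk : ℝ) ≤ t then DecOut.tampered
  else DecOut.invalid

/-!
Correctness and tamper detection are immediate from the definition of the decoder: a tampered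
word differs from the key in at most `t` places. Soundness is a Chernoff bound for the Hamming
ball of radius `t = n p (1 - δ)`, `p = 1 - 1/q`, around `γ̂`: for a uniform key the distance is a
sum of `n` independent Bernoulli(`p`) variables, and weighting the ball by `e^{δ (t - dist)}`
bounds its size by `e^{δ t} (1 + (q - 1) e^{-δ})^n ≤ q^n e^{δ t + n p (e^{-δ} - 1)}`.
-/

lemma Real.exp_neg_le_one_sub_add_sq_div_two {x : ℝ} (hx : 0 ≤ x) :
    Real.exp (-x) ≤ 1 - x + x ^ 2 / 2 := by
  have hpos : (0 : ℝ) < 1 + x + x ^ 2 / 2 := by positivity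
  calc Real.exp (-x) = (Real.exp x)⁻¹ := Real.exp_neg x
    _ ≤ (1 + x + x ^ 2 / 2)⁻¹ := inv_anti₀ hpos (Real.quadratic_le_exp_of_nonneg hx)
    _ ≤ 1 - x + x ^ 2 / 2 := by
      rw [inv_le_iff_one_le_mul₀ hpos]
      nlinarith [pow_nonneg hx 4]

lemma pow_hammingDist_eq_prod {ι S M : Type*} [Fintype ι] [DecidableEq S] [CommMonoid M]
    (γ x : ι → S) (a : M) :
    a ^ hammingDist γ x = ∏ i, if γ i = x i then 1 else a := by
  simp_rw [hammingDist, ← prod_const, prod_filter, ite_not]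

lemma sum_pow_hammingDist {ι S R : Type*} [Fintype ι] [DecidableEq ι] [Fintype S] [Nonempty S]
    [DecidableEq S] [CommRing R] (γ : ι → S) (a : R) :
    ∑ x : ι → S, a ^ hammingDist γ x = (1 + (Fintype.card S - 1) * a) ^ Fintype.card ι := by
  have hcoord (s : S) : ∑ y : S, (if s = y then 1 else a) = 1 + (Fintype.card S - 1) * a := by
    rw [← add_sum_erase _ _ (mem_univ s), if_pos rfl,
      sum_congr rfl fun y hy => if_neg (ne_comm.mp (ne_of_mem_erase hy)), sum_const,
      card_erase_of_mem (mem_univ s), card_univ, nsmul_eq_mul,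
      Nat.cast_pred Fintype.card_pos]
  simp_rw [pow_hammingDist_eq_prod, ← Fintype.prod_sum (fun i y => if γ i = y then 1 else a),
    hcoord, prod_const, card_univ]

section Chernoff

variable {ι S : Type*} [Fintype ι] [DecidableEq ι] [Fintype S] [DecidableEq S]

lemma card_hammingDist_le_le_exp_mul_sum (γ : ι → S) {s : ℝ} (hs : 0 ≤ s) (t : ℝ) :
    (#{x | (hammingDist γ x : ℝ) ≤ t} : ℝ)
      ≤ Real.exp (s * t) * ∑ x : ι → S, Real.exp (-s) ^ hammingDist γ x := by
  rw [← sum_boole, mul_sum]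
  refine sum_le_sum fun x _ => ?_
  split_ifs with hx
  · rw [← Real.exp_nat_mul, ← Real.exp_add, Real.one_le_exp_iff]
    nlinarith
  · positivity

lemma one_add_sub_one_mul_le_mul_exp {q E : ℝ} (hq : 1 ≤ q) :
    1 + (q - 1) * E ≤ q * Real.exp ((1 - q⁻¹) * (E - 1)) := by
  have hq0 : 0 < q := by linarith
  calc 1 + (q - 1) * E = q * ((1 - q⁻¹) * (E - 1) + 1) := by field_simp; ring
    _ ≤ q * Real.exp ((1 - q⁻¹) * (E - 1)) :=
      mul_le_mul_of_nonneg_left (Real.add_one_le_exp _) hq0.le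

/-- Chernoff bound for a Hamming ball of radius `(1 - δ)` times the mean distance to a uniform
word. -/
theorem card_hammingDist_le_le [Nonempty S] (γ : ι → S) {δ : ℝ} (hδ : 0 ≤ δ) :
    (#{x | (hammingDist γ x : ℝ)
        ≤ Fintype.card ι * (1 - (Fintype.card S : ℝ)⁻¹) * (1 - δ)} : ℝ)
      ≤ (Fintype.card S : ℝ) ^ Fintype.card ι
        * Real.exp (-(δ ^ 2 * (1 - (Fintype.card S : ℝ)⁻¹) * Fintype.card ι / 3)) := by
  set q : ℝ := (Fintype.card S : ℝ)
  set N : ℕ := Fintype.card ι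
  set p : ℝ := 1 - q⁻¹
  have hq : (1 : ℝ) ≤ q := Nat.one_le_cast.mpr Fintype.card_pos
  have hp : 0 ≤ p := sub_nonneg.mpr (inv_le_one_of_one_le₀ hq)
  have hexp : Real.exp (-δ) - 1 ≤ -δ + δ ^ 2 / 2 := by
    linarith [Real.exp_neg_le_one_sub_add_sq_div_two hδ]
  calc (#{x | (hammingDist γ x : ℝ) ≤ N * p * (1 - δ)} : ℝ)
      ≤ Real.exp (δ * (N * p * (1 - δ))) * (1 + (q - 1) * Real.exp (-δ)) ^ N := by
        rw [← sum_pow_hammingDist γ]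
        exact card_hammingDist_le_le_exp_mul_sum γ hδ _
    _ ≤ Real.exp (δ * (N * p * (1 - δ))) * (q * Real.exp (p * (Real.exp (-δ) - 1))) ^ N := by
        gcongr
        exact one_add_sub_one_mul_le_mul_exp hq
    _ = q ^ N * Real.exp (N * p * (δ * (1 - δ) + (Real.exp (-δ) - 1))) := by
        rw [mul_pow, ← Real.exp_nat_mul, mul_left_comm, ← Real.exp_add]
        ring_nf
    _ ≤ q ^ N * Real.exp (-(δ ^ 2 * p * N / 3)) := by
        gcongr
        nlinarith [mul_nonneg (Nat.cast_nonneg N) hp, sq_nonneg δ]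

end Chernoff

section SimpleDec

variable {S : Type} [Fintype S] [DecidableEq S] {n : ℕ} {t : ℝ} {sk γ : Fin n → S}

lemma simpleDec_self : simpleDec t sk sk = DecOut.valid := if_pos rfl

lemma simpleDec_ne_invalid_iff (ht : 0 ≤ t) :
    simpleDec t sk γ ≠ DecOut.invalid ↔ (hammingDist γ sk : ℝ) ≤ t := by
  unfold simpleDec
  by_cases hγ : γ = sk
  · simp [hγ, ht]
  · split_ifs <;> simp_all

lemma simpleDec_eq_tampered (hγ : γ ≠ sk) (hdist : (hammingDist γ sk : ℝ) ≤ t) :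
    simpleDec t sk γ = DecOut.tampered := by
  rw [simpleDec, if_neg hγ, if_pos hdist]

end SimpleDec

theorem stmt_8_general
    {S : Type} [Fintype S] [DecidableEq S]
    {n : ℕ} (hq : 2 ≤ Fintype.card S)
    (δ : ℝ) (hδ0 : 0 < δ) (hδ1 : δ < 1)
    (t : ℝ) (ht : t = n * (1 - (Fintype.card S : ℝ)⁻¹) * (1 - δ)) :
    (∀ sk : Fin n → S, simpleDec t sk sk = DecOut.valid) ∧
    (∀ γ : Fin n → S,
      ((∑ sk : Fin n → S,
          if simpleDec t sk γ ≠ DecOut.invalid then ((Fintype.card S : ℝ) ^ n)⁻¹ else 0)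
        = (∑ sk : Fin n → S,
          if (hammingDist γ sk : ℝ) ≤ t then ((Fintype.card S : ℝ) ^ n)⁻¹ else 0)) ∧
      ((∑ sk : Fin n → S,
          if (hammingDist γ sk : ℝ) ≤ t then ((Fintype.card S : ℝ) ^ n)⁻¹ else 0)
        ≤ Real.exp (-(δ ^ 2 * (1 - (Fintype.card S : ℝ)⁻¹) * n / 3)))) ∧
    (∀ (R : Type) [Fintype R] (wr : R → ℝ), (∀ r, 0 ≤ wr r) → (∑ r, wr r = 1) →
      ∀ f : (Fin n → S) → R → Fin n → S,
        (∀ γ r, (hammingDist (f γ r) γ : ℝ) ≤ t) →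
        (∑ sk : Fin n → S, ∑ r,
          if simpleDec t sk (f sk r) ≠ DecOut.tampered ∧ f sk r ≠ sk
          then ((Fintype.card S : ℝ) ^ n)⁻¹ * wr r else 0) = 0) := by
  have : Nonempty S := Fintype.card_pos_iff.mp (by omega)
  have ht0 : 0 ≤ t := by
    rw [ht]
    have : (Fintype.card S : ℝ)⁻¹ ≤ 1 := inv_le_one_of_one_le₀ (Nat.one_le_cast.mpr Fintype.card_pos)
    exact mul_nonneg (mul_nonneg n.cast_nonneg (by linarith)) (by linarith)
  refine ⟨fun sk => simpleDec_self, fun γ => ⟨?_, ?_⟩, ?_⟩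
  · simp_rw [simpleDec_ne_invalid_iff ht0]
  · have hball := card_hammingDist_le_le γ hδ0.le
    rw [Fintype.card_fin, ← ht] at hball
    rw [sum_ite, sum_const_zero, add_zero, sum_const, nsmul_eq_mul,
      ← div_eq_mul_inv, div_le_iff₀ (by positivity), mul_comm]
    exact hball
  · intro R _ wr _ _ f hf
    refine sum_eq_zero fun sk _ => sum_eq_zero fun r _ => if_neg ?_
    rintro ⟨hdec, hne⟩
    exact hdec (simpleDec_eq_tampered hne (hf sk r))

/-- The simple construction (uniform key `sk` on `Σ^n`,
`Enc(sk) = sk`, threshold decoding at `t = n(1 - 1/q)(1 - δ)`): (a) correctness;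
(b) soundness: for every fixed `γ̂`,
`P_sk[Dec(sk, γ̂) ≠ invalid] = P_sk[dist(γ̂, sk) ≤ t] ≤ exp(-δ²(1 - 1/q)n/3)`; and
(c) perfect tamper detection against every (possibly randomized) tampering function
that always changes at most `t` coordinates. -/
theorem stmt_8
    {S : Type} [Fintype S] [DecidableEq S]
    {n : ℕ} (hn : 1 ≤ n) (hq : 2 ≤ Fintype.card S)
    (δ : ℝ) (hδ0 : 0 < δ) (hδ1 : δ < 1)
    (t : ℝ) (ht : t = n * (1 - (Fintype.card S : ℝ)⁻¹) * (1 - δ)) :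
    (∀ sk : Fin n → S, simpleDec t sk sk = DecOut.valid) ∧
    (∀ γ : Fin n → S,
      ((∑ sk : Fin n → S,
          if simpleDec t sk γ ≠ DecOut.invalid then ((Fintype.card S : ℝ) ^ n)⁻¹ else 0)
        = (∑ sk : Fin n → S,
          if (hammingDist γ sk : ℝ) ≤ t then ((Fintype.card S : ℝ) ^ n)⁻¹ else 0)) ∧
      ((∑ sk : Fin n → S,
          if (hammingDist γ sk : ℝ) ≤ t then ((Fintype.card S : ℝ) ^ n)⁻¹ else 0)
        ≤ Real.exp (-(δ ^ 2 * (1 - (Fintype.card S : ℝ)⁻¹) * n / 3)))) ∧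
    (∀ (R : Type) [Fintype R] (wr : R → ℝ), (∀ r, 0 ≤ wr r) → (∑ r, wr r = 1) →
      ∀ f : (Fin n → S) → R → Fin n → S,
        (∀ γ r, (hammingDist (f γ r) γ : ℝ) ≤ t) →
        (∑ sk : Fin n → S, ∑ r,
          if simpleDec t sk (f sk r) ≠ DecOut.tampered ∧ f sk r ≠ sk
          then ((Fintype.card S : ℝ) ^ n)⁻¹ * wr r else 0) = 0) :=
  stmt_8_general hq δ hδ0 hδ1 t ht
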